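/- Let G(m,p,n) act on ℂⁿ and let g be a nondiagonal element (i.e., the underlying permutation of g is not the identity). Then there exists a transposition-type reflection s in G(m,p,n) with codim(gs) < codim(g). Hence every nonreflection atom in the codimension order of G(m,p,n) is a diagonal matrix. -/

import Mathlib

open Module Matrix

noncomputable section

/-- The primitive m-th root of unity e^{2πi/m}. -/
def zeta (m : ℕ) : ℂ := Complex.exp (2 * Real.pi * Complex.I / m)

/-- codim of a matrix: n minus the dimension of its fixed space. -/
def codimM {n : ℕ} (M : Matrix (Fin n) (Fin n) ℂ) : ℕ :=
  n - finrank ℂ (LinearMap.ker (M.mulVecLin - LinearMap.id))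

/-- Membership in the monomial reflection group G(m,p,n): a monomial matrix with
entries m-th roots of unity whose nonzero entries multiply to an (m/p)-th root of unity. -/
def InG (m p n : ℕ) (M : Matrix (Fin n) (Fin n) ℂ) : Prop :=
  ∃ (σ : Equiv.Perm (Fin n)) (d : Fin n → ℂ),
    (∀ j, d j ^ m = 1) ∧ ((∏ j, d j) ^ (m / p) = 1) ∧
    ∀ i j, M i j = if i = σ j then d j else 0

/-- A reflection of G(m,p,n): a nonidentity element of the group fixing a hyperplane
pointwise (i.e. of codimension one). -/
def IsReflM (m p n : ℕ) (M : Matrix (Fin n) (Fin n) ℂ) : Prop :=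
  InG m p n M ∧ M ≠ 1 ∧ codimM M = 1

/-- Reflection length in G(m,p,n). -/
def reflLenM (m p n : ℕ) (M : Matrix (Fin n) (Fin n) ℂ) : ℕ :=
  sInf {k | ∃ l : List (Matrix (Fin n) (Fin n) ℂ),
    (∀ s ∈ l, IsReflM m p n s) ∧ l.length = k ∧ l.prod = M}

/-- Transposition-type reflection: swaps coordinates i and j scaling by ζ^a and ζ^{-a}. -/
def IsTranspRefl (m n : ℕ) (M : Matrix (Fin n) (Fin n) ℂ) : Prop :=
  ∃ (i j : Fin n) (c : ℂ), i ≠ j ∧ c ^ m = 1 ∧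
    M = Matrix.of (fun k l =>
      if k = i ∧ l = j then c
      else if k = j ∧ l = i then c⁻¹
      else if k = l ∧ k ≠ i ∧ k ≠ j then 1 else 0)

/-- The codimension order relation on matrices. -/
def codimLeM {n : ℕ} (a c : Matrix (Fin n) (Fin n) ℂ) : Prop :=
  codimM a + codimM (a⁻¹ * c) = codimM c

/-!
An element `M` of `G(m,p,n)` is monomial: `M eₗ = dₗ e_{σ l}`. If `σ` moves `i`, put `j = σ i` and
let `s` be the transposition-type reflection exchanging the lines of `eᵢ` and `eⱼ` whose fixed
hyperplane is `vⱼ = dᵢ vᵢ`. This hyperplane contains `Fix M`, so `Fix M ⊆ Fix (M s)`, and `M s`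
also fixes `eⱼ`, which `M` moves; hence `codim (M s) < codim M`. As `s` is an involution of
codimension one, subadditivity of `codim` forces `codim (M s) + codim s = codim M`, so `M s` lies
below `M` in the codimension order, and it differs from `1` unless `M = s` is a reflection.
-/

section FixSpace

variable {ι R : Type*} [Fintype ι] [CommRing R]

def fixSpace (M : Matrix ι ι R) : Submodule R (ι → R) :=
  LinearMap.ker (M.mulVecLin - LinearMap.id)

theorem mem_fixSpace {M : Matrix ι ι R} {v : ι → R} : v ∈ fixSpace M ↔ M *ᵥ v = v := by
  simp [fixSpace, sub_eq_zero]

theorem fixSpace_inf_le_fixSpace_mul (A B : Matrix ι ι R) :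
    fixSpace A ⊓ fixSpace B ≤ fixSpace (A * B) := by
  rintro v ⟨hA, hB⟩
  rw [mem_fixSpace, ← mulVec_mulVec, mem_fixSpace.1 hB, mem_fixSpace.1 hA]

theorem fixSpace_le_fixSpace_mul {A B : Matrix ι ι R} (h : fixSpace A ≤ fixSpace B) :
    fixSpace A ≤ fixSpace (A * B) :=
  (le_inf le_rfl h).trans (fixSpace_inf_le_fixSpace_mul A B)

end FixSpace

section Monomial

variable {ι R : Type*} [DecidableEq ι]

def IsMonomialWith [Zero R] (M : Matrix ι ι R) (σ : Equiv.Perm ι) (d : ι → R) : Prop :=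
  ∀ i j, M i j = if i = σ j then d j else 0

namespace IsMonomialWith

variable {M : Matrix ι ι R} {σ : Equiv.Perm ι} {d : ι → R}

theorem eq_diagonal [Zero R] (hM : IsMonomialWith M σ d) (hσ : σ = 1) : M = diagonal d := by
  ext k l
  rw [hM k l, hσ, Equiv.Perm.one_apply, diagonal_apply]
  split_ifs with h <;> simp [h]

variable [Fintype ι] [CommRing R]

theorem mulVec_apply (hM : IsMonomialWith M σ d) (v : ι → R) (k : ι) :
    (M *ᵥ v) (σ k) = d k * v k := by
  simp [mulVec, dotProduct, hM _ _, σ.injective.eq_iff]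

theorem mulVec_single (hM : IsMonomialWith M σ d) (l : ι) (a : R) :
    M *ᵥ Pi.single l a = Pi.single (σ l) (d l * a) := by
  ext k
  simp [hM _ _, Pi.single_apply, mul_comm]

theorem mem_fixSpace_iff (hM : IsMonomialWith M σ d) {v : ι → R} :
    v ∈ fixSpace M ↔ ∀ l, v (σ l) = d l * v l := by
  rw [mem_fixSpace, funext_iff, σ.surjective.forall]
  simp only [hM.mulVec_apply, eq_comm]

theorem mul {B : Matrix ι ι R} {τ : Equiv.Perm ι} {e : ι → R}
    (hM : IsMonomialWith M σ d) (hB : IsMonomialWith B τ e) :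
    IsMonomialWith (M * B) (σ * τ) (fun l => d (τ l) * e l) := by
  intro k l
  simp only [Matrix.mul_apply, hM _ _, hB _ _, mul_ite, mul_zero, ite_mul, zero_mul,
    Finset.sum_ite_eq', Finset.mem_univ, if_true]
  rfl

theorem isUnit {K : Type*} [Field K] {M : Matrix ι ι K} {d : ι → K}
    (hM : IsMonomialWith M σ d) (hd : ∀ l, d l ≠ 0) : IsUnit M := by
  refine mulVec_injective_iff_isUnit.1 fun v w h => funext fun k => ?_
  have := congrFun h (σ k)
  rw [hM.mulVec_apply, hM.mulVec_apply] at this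
  exact mul_left_cancel₀ (hd k) this

end IsMonomialWith

end Monomial

section TranspRefl

variable {ι K : Type*} [DecidableEq ι] [Field K] {i j : ι} {c : K}

-- The matrix of `IsTranspRefl`, so that `IsTranspRefl m n (transpRefl i j c)` holds by `rfl`.
def transpRefl (i j : ι) (c : K) : Matrix ι ι K :=
  Matrix.of fun k l =>
    if k = i ∧ l = j then c
    else if k = j ∧ l = i then c⁻¹
    else if k = l ∧ k ≠ i ∧ k ≠ j then 1 else 0

def transpReflCoeff (i j : ι) (c : K) (l : ι) : K :=
  if l = j then c else if l = i then c⁻¹ else 1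

theorem isMonomialWith_transpRefl (hij : i ≠ j) :
    IsMonomialWith (transpRefl i j c) (Equiv.swap i j) (transpReflCoeff i j c) := by
  intro k l
  simp only [transpRefl, transpReflCoeff, of_apply, Equiv.swap_apply_def]
  split_ifs <;> simp_all

theorem transpReflCoeff_swap_mul (hij : i ≠ j) (hc : c ≠ 0) (l : ι) :
    transpReflCoeff i j c (Equiv.swap i j l) * transpReflCoeff i j c l = 1 := by
  simp only [transpReflCoeff, Equiv.swap_apply_def]
  split_ifs <;> simp_all

theorem prod_transpReflCoeff [Fintype ι] (hij : i ≠ j) (hc : c ≠ 0) :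
    ∏ l, transpReflCoeff i j c l = 1 := by
  rw [Fintype.prod_eq_mul j i hij.symm fun l hl => by simp [transpReflCoeff, hl.1, hl.2]]
  simp [transpReflCoeff, hij, hc]

theorem transpRefl_mul_self [Fintype ι] (hij : i ≠ j) (hc : c ≠ 0) :
    transpRefl i j c * transpRefl i j c = 1 := by
  rw [((isMonomialWith_transpRefl hij).mul (isMonomialWith_transpRefl hij)).eq_diagonal
    (Equiv.swap_mul_self i j), ← diagonal_one]
  exact congrArg diagonal (funext (transpReflCoeff_swap_mul hij hc))

end TranspRefl

section Codim

variable {n : ℕ}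

theorem codimM_eq (M : Matrix (Fin n) (Fin n) ℂ) : codimM M = n - finrank ℂ (fixSpace M) := rfl

theorem finrank_fixSpace_le (M : Matrix (Fin n) (Fin n) ℂ) : finrank ℂ (fixSpace M) ≤ n := by
  simpa using (fixSpace M).finrank_le

theorem codimM_one : codimM (1 : Matrix (Fin n) (Fin n) ℂ) = 0 := by
  rw [codimM, mulVecLin_one, sub_self, LinearMap.ker_zero, finrank_top, finrank_fin_fun,
    Nat.sub_self]

theorem codimM_lt_of_fixSpace_lt {A B : Matrix (Fin n) (Fin n) ℂ} (h : fixSpace A < fixSpace B) :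
    codimM B < codimM A := by
  have := Submodule.finrank_lt_finrank_of_lt h
  have := finrank_fixSpace_le B
  rw [codimM_eq, codimM_eq]
  omega

theorem codimM_mul_le (A B : Matrix (Fin n) (Fin n) ℂ) :
    codimM (A * B) ≤ codimM A + codimM B := by
  have := Submodule.finrank_sup_add_finrank_inf_eq (fixSpace A) (fixSpace B)
  have := Submodule.finrank_mono (fixSpace_inf_le_fixSpace_mul A B)
  have := (fixSpace A ⊔ fixSpace B).finrank_le
  have := finrank_fixSpace_le (A * B)
  rw [finrank_fin_fun] at *
  simp only [codimM_eq]
  omega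

theorem codimM_le_codimM_mul_add (M : Matrix (Fin n) (Fin n) ℂ) {s : Matrix (Fin n) (Fin n) ℂ}
    (hs : s * s = 1) : codimM M ≤ codimM (M * s) + codimM s := by
  simpa [mul_assoc, hs] using codimM_mul_le (M * s) s

theorem codimM_le_one_of_ker_le {M : Matrix (Fin n) (Fin n) ℂ} (φ : (Fin n → ℂ) →ₗ[ℂ] ℂ)
    (h : LinearMap.ker φ ≤ fixSpace M) : codimM M ≤ 1 := by
  have := LinearMap.finrank_range_add_finrank_ker φ
  have := (LinearMap.range φ).finrank_le
  have := Submodule.finrank_mono h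
  rw [finrank_fin_fun, finrank_self] at *
  rw [codimM_eq]
  omega

theorem codimM_transpRefl_le_one {i j : Fin n} {c : ℂ} (hij : i ≠ j) (hc : c ≠ 0) :
    codimM (transpRefl i j c) ≤ 1 := by
  refine codimM_le_one_of_ker_le (LinearMap.proj i - c • LinearMap.proj j) fun v hv => ?_
  have hv : v i = c * v j := by simpa [sub_eq_zero] using hv
  refine (isMonomialWith_transpRefl hij).mem_fixSpace_iff.2 fun l => ?_
  by_cases hlj : l = j
  · simp [hlj, transpReflCoeff, hv]
  by_cases hli : l = i
  · simp [hli, transpReflCoeff, hij, hv, hc]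
  · simp [Equiv.swap_apply_of_ne_of_ne hli hlj, transpReflCoeff, hli, hlj]

end Codim

theorem codimM_mul_transpRefl_lt {n : ℕ} {M : Matrix (Fin n) (Fin n) ℂ} {σ : Equiv.Perm (Fin n)}
    {d : Fin n → ℂ} (hM : IsMonomialWith M σ d) {i : Fin n} (hi : σ i ≠ i) (hd : d i ≠ 0) :
    codimM (M * transpRefl i (σ i) (d i)⁻¹) < codimM M := by
  have hs := isMonomialWith_transpRefl (c := (d i)⁻¹) hi.symm
  refine codimM_lt_of_fixSpace_lt (SetLike.lt_iff_le_and_exists.2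
    ⟨fixSpace_le_fixSpace_mul fun v hv => ?_, Pi.single (σ i) 1, ?_, ?_⟩)
  · rw [hM.mem_fixSpace_iff] at hv
    refine hs.mem_fixSpace_iff.2 fun l => ?_
    by_cases hl : l = σ i
    · simp [hl, transpReflCoeff, hv i, hd]
    by_cases hli : l = i
    · simp [hli, transpReflCoeff, hv i, hi.symm]
    · simp [Equiv.swap_apply_of_ne_of_ne hli hl, transpReflCoeff, hli, hl]
  · rw [mem_fixSpace, ← mulVec_mulVec, hs.mulVec_single, hM.mulVec_single]
    simp [transpReflCoeff, hd]
  · intro h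
    simpa [hi.symm] using hM.mem_fixSpace_iff.1 h i

namespace InG

variable {m p n : ℕ} {A B : Matrix (Fin n) (Fin n) ℂ}

theorem mul (hA : InG m p n A) (hB : InG m p n B) : InG m p n (A * B) := by
  obtain ⟨σ, d, hdm, hdp, hA : IsMonomialWith A σ d⟩ := hA
  obtain ⟨τ, e, hem, hep, hB : IsMonomialWith B τ e⟩ := hB
  refine ⟨σ * τ, fun l => d (τ l) * e l, fun l => ?_, ?_, hA.mul hB⟩
  · rw [mul_pow, hdm, hem, one_mul]
  · rw [Finset.prod_mul_distrib, Equiv.prod_comp τ d, mul_pow, hdp, hep, one_mul]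

theorem isUnit (hm : 0 < m) (hA : InG m p n A) : IsUnit A := by
  obtain ⟨σ, d, hdm, -, hA : IsMonomialWith A σ d⟩ := hA
  exact hA.isUnit fun l => ne_zero_pow hm.ne' (by simp [hdm l])

end InG

theorem inG_transpRefl {m p n : ℕ} {i j : Fin n} {c : ℂ} (hij : i ≠ j) (hcm : c ^ m = 1)
    (hc : c ≠ 0) : InG m p n (transpRefl i j c) := by
  refine ⟨Equiv.swap i j, transpReflCoeff i j c, fun l => ?_, ?_, isMonomialWith_transpRefl hij⟩
  · unfold transpReflCoeff
    split_ifs <;> simp [hcm]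
  · rw [prod_transpReflCoeff hij hc, one_pow]

theorem exists_transpRefl_codimM_mul_lt {m p n : ℕ} (hm : 0 < m)
    {M : Matrix (Fin n) (Fin n) ℂ} (hM : InG m p n M) (hnd : ¬ ∃ d, M = diagonal d) :
    ∃ s, IsTranspRefl m n s ∧ InG m p n s ∧ codimM (M * s) < codimM M := by
  obtain ⟨σ, d, hdm, -, hM : IsMonomialWith M σ d⟩ := hM
  obtain ⟨i, hi⟩ : ∃ i, σ i ≠ i := by
    by_contra! hσ
    exact hnd ⟨d, hM.eq_diagonal (Equiv.ext hσ)⟩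
  have hd : d i ≠ 0 := ne_zero_pow hm.ne' (by simp [hdm i])
  have hcm : (d i)⁻¹ ^ m = 1 := by rw [inv_pow, hdm, inv_one]
  exact ⟨_, ⟨i, σ i, _, hi.symm, hcm, rfl⟩, inG_transpRefl hi.symm hcm (inv_ne_zero hd),
    codimM_mul_transpRefl_lt hM hi hd⟩

theorem codimLeM_mul_of_mul_self_eq_one {n : ℕ} {M s : Matrix (Fin n) (Fin n) ℂ} (hM : IsUnit M)
    (hs : s * s = 1) (hs1 : codimM s ≤ 1) (hlt : codimM (M * s) < codimM M) :
    codimLeM (M * s) M := by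
  have hinv : (M * s)⁻¹ * M = s := by
    rw [Matrix.mul_inv_rev, inv_eq_left_inv hs, mul_assoc,
      nonsing_inv_mul _ ((isUnit_iff_isUnit_det M).1 hM), mul_one]
  have := codimM_le_codimM_mul_add M hs
  rw [codimLeM, hinv]
  omega

theorem nondiagonal_not_atom_general (m p n : ℕ) (hm : 0 < m) :
    (∀ M : Matrix (Fin n) (Fin n) ℂ, InG m p n M → (¬ ∃ d, M = Matrix.diagonal d) →
      ∃ s : Matrix (Fin n) (Fin n) ℂ, IsTranspRefl m n s ∧ InG m p n s ∧
        codimM (M * s) < codimM M) ∧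
    (∀ M : Matrix (Fin n) (Fin n) ℂ, InG m p n M → M ≠ 1 → ¬ IsReflM m p n M →
      (∀ h : Matrix (Fin n) (Fin n) ℂ, InG m p n h → h ≠ 1 → h ≠ M → ¬ codimLeM h M) →
      ∃ d, M = Matrix.diagonal d) := by
  refine ⟨fun M => exists_transpRefl_codimM_mul_lt hm, fun M hM hM1 hrefl hatom => ?_⟩
  by_contra hnd
  obtain ⟨s, ⟨i, j, c, hij, hcm, hs⟩, hsG, hlt⟩ := exists_transpRefl_codimM_mul_lt hm hM hnd
  obtain rfl : s = transpRefl i j c := hs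
  have hc : c ≠ 0 := ne_zero_pow hm.ne' (by simp [hcm])
  have hss := transpRefl_mul_self hij hc
  have hs1 := codimM_transpRefl_le_one hij hc
  refine hatom _ (hM.mul hsG) (fun h1 => hrefl ⟨hM, hM1, ?_⟩) (ne_of_apply_ne codimM hlt.ne)
    (codimLeM_mul_of_mul_self_eq_one (hM.isUnit hm) hss hs1 hlt)
  have := codimM_le_codimM_mul_add M hss
  rw [h1, codimM_one] at this hlt
  omega

theorem nondiagonal_not_atom (m p n : ℕ) (hm : 0 < m) (hp : 0 < p) (hdvd : p ∣ m) :
    (∀ M : Matrix (Fin n) (Fin n) ℂ, InG m p n M → (¬ ∃ d, M = Matrix.diagonal d) →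
      ∃ s : Matrix (Fin n) (Fin n) ℂ, IsTranspRefl m n s ∧ InG m p n s ∧
        codimM (M * s) < codimM M) ∧
    (∀ M : Matrix (Fin n) (Fin n) ℂ, InG m p n M → M ≠ 1 → ¬ IsReflM m p n M →
      (∀ h : Matrix (Fin n) (Fin n) ℂ, InG m p n h → h ≠ 1 → h ≠ M → ¬ codimLeM h M) →
      ∃ d, M = Matrix.diagonal d) :=
  nondiagonal_not_atom_general m p n hm
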